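/- arXiv:1805.05369 — 2 statements merged into one kernel-verified Lean document; each statement's English description precedes it below -/
import Mathlib

section
/- For any integer d ≥ 2, the first group cohomology H¹(S_d, T_d) vanishes, where T_d = ℤ^d is the standard permutation representation of the symmetric group S_d, acting by τ·e_i = e_{τ(i)} on the canonical basis. -/
/-!
A 1-cocycle `f` with values in `k[X]` restricts, on the stabilizer of a point `x`, to the
homomorphism `h ↦ (f h) x` into the torsion-free group `k`; as `G` is torsion, this vanishes.
Hence `(f σ) x` only depends on the point `σ⁻¹ • x`. Choosing a representative `x₀` in each orbit,
the element `m` with `m y = (f σ) x₀` for any `σ` moving `y` to `x₀` satisfies `f g = g • m - m`.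
-/

open MulAction

universe u

namespace groupCohomology

lemma subsingleton_H1_of_forall_mem_coboundaries₁ {k G : Type u} [CommRing k] [Group G]
    {A : Rep k G} (h : ∀ f : cocycles₁ A, ⇑f ∈ coboundaries₁ A) : Subsingleton (H1 A) := by
  suffices ∀ z : H1 A, z = 0 from ⟨fun x y => by rw [this x, this y]⟩
  intro z
  induction z using H1_induction_on with
  | h f => exact (H1π_eq_zero_iff f).2 (h f)

variable {k G X : Type u} [CommRing k] [Group G] [MulAction G X]
  (f : cocycles₁ (Rep.ofMulAction k G X))

lemma coeff_cocycles₁_mul (g h : G) (x : X) :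
    (f (g * h)).coeff x = (f h).coeff (g⁻¹ • x) + (f g).coeff x := by
  simpa using congrArg (MonoidAlgebra.coeff · x) ((mem_cocycles₁_iff _).1 f.2 g h)

lemma coeff_cocycles₁_pow_of_mem_stabilizer {h : G} {x : X} (hx : h ∈ stabilizer G x) (n : ℕ) :
    (f (h ^ n)).coeff x = n • (f h).coeff x := by
  induction n with
  | zero => simp
  | succ n ih =>
    rw [pow_succ', coeff_cocycles₁_mul, inv_smul_eq_iff.2 (mem_stabilizer_iff.1 hx).symm, ih,
      succ_nsmul]

lemma coeff_cocycles₁_eq_zero_of_mem_stabilizer [IsAddTorsionFree k] (hG : IsMulTorsion G)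
    {h : G} {x : X} (hx : h ∈ stabilizer G x) : (f h).coeff x = 0 := by
  obtain ⟨n, hn, hpow⟩ := isOfFinOrder_iff_pow_eq_one.1 (hG h)
  refine nsmul_right_injective hn.ne' ?_
  simp [← coeff_cocycles₁_pow_of_mem_stabilizer f hx, hpow]

lemma coeff_cocycles₁_eq_of_smul_eq [IsAddTorsionFree k] (hG : IsMulTorsion G) {σ τ : G}
    {x y : X} (hσ : σ • y = x) (hτ : τ • y = x) : (f σ).coeff x = (f τ).coeff x := by
  have hstab : σ * τ⁻¹ ∈ stabilizer G x := by
    rw [mem_stabilizer_iff, mul_smul, inv_smul_eq_iff.2 hτ.symm, hσ]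
  have h := coeff_cocycles₁_mul f (σ * τ⁻¹) τ x
  rwa [inv_mul_cancel_right, coeff_cocycles₁_eq_zero_of_mem_stabilizer f hG hstab, add_zero,
    mem_stabilizer_iff.1 (inv_mem hstab)] at h

theorem mem_coboundaries₁_ofMulAction [Finite X] [IsAddTorsionFree k] (hG : IsMulTorsion G) :
    ⇑f ∈ coboundaries₁ (Rep.ofMulAction k G X) := by
  let rep (y : X) : X := (Quotient.mk (orbitRel G X) y).out
  have rep_smul (g : G) (y : X) : rep (g • y) = rep y :=
    congrArg Quotient.out (Quotient.sound (mem_orbit y g))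
  choose σ hσ using fun y => mem_orbit_iff.1 (Quotient.mk_out (s := orbitRel G X) y)
  let m : MonoidAlgebra k X :=
    .ofCoeff (Finsupp.equivFunOnFinite.symm fun y => (f (σ y)).coeff (rep y))
  refine ⟨m, funext fun g => ?_⟩
  rw [d₀₁_hom_apply]
  ext y
  have hτ : (σ y * g) • g⁻¹ • y = rep (g⁻¹ • y) := by
    rw [mul_smul, smul_inv_smul, hσ, rep_smul]
  have h := coeff_cocycles₁_mul f (σ y) g (rep y)
  rw [← rep_smul g⁻¹ y, ← coeff_cocycles₁_eq_of_smul_eq f hG (hσ _) hτ, rep_smul,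
    inv_smul_eq_iff.2 (hσ y).symm] at h
  simp only [MonoidAlgebra.coeff_sub, Finsupp.sub_apply, Representation.coeff_ofMulAction]
  change (f (σ (g⁻¹ • y))).coeff (rep (g⁻¹ • y)) - (f (σ y)).coeff (rep y) = _
  rw [h, add_sub_cancel_right]

theorem subsingleton_H1_ofMulAction [Finite X] [IsAddTorsionFree k] (hG : IsMulTorsion G) :
    Subsingleton (H1 (Rep.ofMulAction k G X)) :=
  subsingleton_H1_of_forall_mem_coboundaries₁ fun f => mem_coboundaries₁_ofMulAction f hG

end groupCohomology

theorem stmt_2_general (d : ℕ) :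
    Subsingleton
      (groupCohomology.H1 (Rep.ofMulAction ℤ (Equiv.Perm (Fin d)) (Fin d))) :=
  groupCohomology.subsingleton_H1_ofMulAction isMulTorsion_of_finite

/-- For `d ≥ 2`, `H¹(S_d, T_d) = 0`, where `T_d = ℤ^d` is the standard permutation
representation of `S_d` (the free `ℤ`-module on `Fin d` with `τ • e_i = e_{τ i}`). -/
theorem stmt_2 (d : ℕ) (hd : 2 ≤ d) :
    Subsingleton
      (groupCohomology.H1 (Rep.ofMulAction ℤ (Equiv.Perm (Fin d)) (Fin d))) :=
  stmt_2_general d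
end

section
/- For any integer d ≥ 2, the first group cohomology H¹(S_d, U_d) vanishes, where U_d is the free ℤ-module with basis {e_{i,j} : 1 ≤ i < j ≤ d} on which S_d acts by τ·e_{i,j} = e_{τ(i),τ(j)} (with indices reordered so the smaller index comes first). -/
open Pointwise

/-- The set of 2-element subsets of `{1, ..., d}`, the basis of `U_d`. -/
def TwoSubsets (d : ℕ) : Type := {s : Finset (Fin d) // s.card = 2}

/-- `S_d` acts on 2-element subsets of `{1, ..., d}` by `τ • {i,j} = {τ i, τ j}`. -/
instance (d : ℕ) : MulAction (Equiv.Perm (Fin d)) (TwoSubsets d) where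
  smul σ s := ⟨σ • s.1, by rw [Finset.card_smul_finset]; exact s.2⟩
  one_smul s := Subtype.ext (one_smul _ s.1)
  mul_smul a b s := Subtype.ext (mul_smul a b s.1)

/-!
`H¹(G, ℤ[α])` vanishes for every finite group `G` and every `G`-set `α`. Summing the cocycle
identity `f (g * h) = g • f h + f g` over `h` gives `|G| • f g = w - g • w` with `w = ∑ h, f h`.
Hence the coefficients of `w` along a `G`-orbit are congruent modulo `|G|`, so the coefficientwise
quotient `z = -(w / |G|)` satisfies `|G| • (g • z - z) = |G| • f g`, and `f = d z` because `ℤ[α]`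
is torsion-free.
-/

universe u

namespace groupCohomology

open Finset

lemma card_smul_cocycles₁_eq {k G : Type u} [CommRing k] [Group G] [Fintype G] {A : Rep k G}
    (f : cocycles₁ A) (g : G) :
    Fintype.card G • f g = ∑ h, f h - A.ρ g (∑ h, f h) := by
  rw [eq_sub_iff_add_eq]
  calc Fintype.card G • f g + A.ρ g (∑ h, f h) = ∑ h, (A.ρ g (f h) + f g) := by
        rw [sum_add_distrib, map_sum, sum_const, card_univ, add_comm]
    _ = ∑ h, f (g * h) := sum_congr rfl fun h _ => ((mem_cocycles₁_iff f).1 f.2 g h).symm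
    _ = ∑ h, f h := Fintype.sum_equiv (Equiv.mulLeft g) _ _ fun _ => rfl

lemma mem_coboundaries₁_ofMulAction_s3 {G α : Type} [Group G] [Fintype G] [MulAction G α]
    (f : cocycles₁ (Rep.ofMulAction ℤ G α)) : ⇑f ∈ coboundaries₁ (Rep.ofMulAction ℤ G α) := by
  set n : ℤ := (Fintype.card G : ℤ)
  set w := (∑ h, f h).coeff
  have hw (g : G) (a : α) : n * (f g).coeff a = w a - w (g⁻¹ • a) := by
    have := congrArg (fun x => x.coeff a) (card_smul_cocycles₁_eq f g)
    rw [← Nat.cast_smul_eq_nsmul ℤ] at this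
    simpa only [MonoidAlgebra.coeff_sub, MonoidAlgebra.coeff_smul_apply, Finsupp.sub_apply,
      Representation.coeff_ofMulAction, smul_eq_mul] using this
  let z : MonoidAlgebra ℤ α := .ofCoeff (Finsupp.mapRange (fun c => -(c / n)) (by simp) w)
  refine ⟨z, funext fun g => MonoidAlgebra.coeff_injective (Finsupp.ext fun a => ?_)⟩
  have hn : n ≠ 0 := Nat.cast_ne_zero.2 Fintype.card_ne_zero
  have hdvd : n ∣ w a - w (g⁻¹ • a) := ⟨_, (hw g a).symm⟩
  refine mul_left_cancel₀ hn ?_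
  rw [d₀₁_hom_apply, MonoidAlgebra.coeff_sub, Finsupp.sub_apply,
    Representation.coeff_ofMulAction, hw]
  simp only [z, Finsupp.mapRange_apply, neg_sub_neg]
  rw [← Int.sub_ediv_of_dvd_sub hdvd, Int.mul_ediv_cancel' hdvd]

theorem subsingleton_H1_ofMulAction_s3 (G α : Type) [Group G] [Fintype G] [MulAction G α] :
    Subsingleton (H1 (Rep.ofMulAction ℤ G α)) := by
  refine subsingleton_of_forall_eq 0 fun x => ?_
  induction x using H1_induction_on with
  | h f => exact (H1π_eq_zero_iff f).2 (mem_coboundaries₁_ofMulAction_s3 f)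

end groupCohomology

theorem stmt_3_general (d : ℕ) :
    Subsingleton
      (groupCohomology.H1 (Rep.ofMulAction ℤ (Equiv.Perm (Fin d)) (TwoSubsets d))) :=
  groupCohomology.subsingleton_H1_ofMulAction_s3 _ _

/-- For `d ≥ 2`, `H¹(S_d, U_d) = 0`, where `U_d` is the free `ℤ`-module on the
2-element subsets `{i,j} ⊆ {1,...,d}` with `τ • e_{i,j} = e_{τ i, τ j}`. -/
theorem stmt_3 (d : ℕ) (hd : 2 ≤ d) :
    Subsingleton
      (groupCohomology.H1 (Rep.ofMulAction ℤ (Equiv.Perm (Fin d)) (TwoSubsets d))) :=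
  stmt_3_general d
end
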